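/- arXiv:1902.09180 — 2 statements merged into one kernel-verified Lean document; each statement's English description precedes it below -/
import Mathlib

section
/- Let 𝔪 be a multisegment, and let 𝔪' be its derived multisegment under one step of the Knuth (RSK row-extraction) algorithm, supported on the index set I' of non-selected indices. Then for all i ∈ I', the depth of i with respect to 𝔪' is at most the depth of i with respect to 𝔪: 𝔡_{𝔪'}(i) ≤ 𝔡_{𝔪}(i). -/
/-- A segment `[a,b]` of integers with `a ≤ b`. -/
structure Segment where
  a : ℤ
  b : ℤ
  hle : a ≤ b

namespace Segment

/-- `s ≪ t` iff both the begin and end points of `s` are strictly smaller. -/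
def ll (s t : Segment) : Prop := s.a < t.a ∧ s.b < t.b

/-- Containment of segments: `s ⊆ t`. -/
def sub (s t : Segment) : Prop := t.a ≤ s.a ∧ s.b ≤ t.b

/-- Strict containment of segments: `s ⊊ t`. -/
def ssub (s t : Segment) : Prop := sub s t ∧ s ≠ t

end Segment

/-- There is a `≪`-ascending chain of length `j` in the family `Δ` starting at index `i`. -/
def ChainFrom {I : Type*} (Δ : I → Segment) (i : I) (j : ℕ) : Prop :=
  ∃ f : Fin (j + 1) → I, f 0 = i ∧
    ∀ r : Fin j, Segment.ll (Δ (f r.castSucc)) (Δ (f r.succ))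

/-- `d` is the depth function of the multisegment `Δ`: `d i` is the maximal length of a
`≪`-ascending chain starting at `Δ i`. -/
def IsDepth {I : Type*} (Δ : I → Segment) (d : I → ℕ) : Prop :=
  ∀ i, IsGreatest {j | ChainFrom Δ i j} (d i)

/-- The data of one step of the Knuth (RSK row-extraction) algorithm on a multisegment
`Δ : I → Segment`: the depth function `d`, admissible enumerations `L k` of the depth fibers
(containment-decreasing lists), the permutation `σ` cycling each fiber, and the segments
`Δ' i = [b(Δ i), e(Δ (σ i))]`. -/
structure KnuthData (I : Type*) where
  Δ : I → Segment
  d : I → ℕ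
  σ : Equiv.Perm I
  L : ℕ → List I
  Δ' : I → Segment
  hd : IsDepth Δ d
  hnodup : ∀ k, (L k).Nodup
  hmem : ∀ k i, i ∈ L k ↔ d i = k
  hchain : ∀ k, (L k).Chain' fun p q => Segment.sub (Δ q) (Δ p)
  hσ : ∀ (k : ℕ) (n : ℕ) (hn : n < (L k).length),
    σ ((L k).get ⟨n, hn⟩) =
      (L k).get ⟨(n + 1) % (L k).length,
        Nat.mod_lt _ (Nat.lt_of_le_of_lt (Nat.zero_le n) hn)⟩
  hΔ'a : ∀ i, (Δ' i).a = (Δ i).a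
  hΔ'b : ∀ i, (Δ' i).b = (Δ (σ i)).b

/-- `i` belongs to the ladder index set `Î`: it is the last index of the admissible enumeration
of its depth fiber.  The highest ladder `𝔩(𝔪)` consists of the segments `Δ' i`, `i ∈ Î`, and the
derived multisegment `𝔪'` of the segments `Δ' i`, `i ∉ Î`. -/
def IhatP {I : Type*} (K : KnuthData I) (i : I) : Prop :=
  (K.L (K.d i)).getLast? = some i


section Aux
variable {I : Type*}

lemma depth_lt {Δ : I → Segment} {d : I → ℕ} (hd : IsDepth Δ d) {i j : I}
    (h : Segment.ll (Δ i) (Δ j)) : d j < d i := by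
  obtain ⟨f, hf0, hf⟩ := (hd j).1
  have hc : ChainFrom Δ i (d j + 1) := by
    refine ⟨Fin.cons i f, rfl, fun r => ?_⟩
    induction r using Fin.cases with
    | zero => simpa [hf0] using h
    | succ s => simpa [← Fin.succ_castSucc] using hf s
  exact Nat.lt_of_succ_le ((hd i).2 hc)

lemma chainFrom_tail {Δ : I → Segment} {j : ℕ} {x : I} (h : ChainFrom Δ x (j + 1)) :
    ∃ y, Segment.ll (Δ x) (Δ y) ∧ ChainFrom Δ y j := by
  obtain ⟨f, hf0, hf⟩ := h
  refine ⟨f 1, by simpa [hf0] using hf 0, fun r => f r.succ, rfl, fun r => ?_⟩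
  simpa [← Fin.succ_castSucc] using hf r.succ

/-- Along chains one can find an element of any smaller depth whose segment has
larger endpoints. -/
lemma exists_depth_eq {Δ : I → Segment} {d : I → ℕ} (hd : IsDepth Δ d) :
    ∀ n (j : I), d j = n → ∀ k ≤ n,
      ∃ j₂, d j₂ = k ∧ (Δ j).a ≤ (Δ j₂).a ∧ (Δ j).b ≤ (Δ j₂).b := by
  intro n
  induction n using Nat.strong_induction_on with
  | _ n ih =>
    intro j hj k hk
    rcases eq_or_lt_of_le hk with rfl | hk
    · exact ⟨j, hj, le_rfl, le_rfl⟩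
    · obtain ⟨m, rfl⟩ : ∃ m, n = m + 1 := ⟨n - 1, by omega⟩
      have hcj : ChainFrom Δ j (m + 1) := hj ▸ (hd j).1
      obtain ⟨y, hll, hcy⟩ := chainFrom_tail hcj
      have hyd : d y < m + 1 := hj ▸ depth_lt hd hll
      have hky : k ≤ d y := le_trans (by omega) ((hd y).2 hcy)
      obtain ⟨j₂, h1, h2, h3⟩ := ih (d y) hyd y rfl k hky
      exact ⟨j₂, h1, le_trans hll.1.le h2, le_trans hll.2.le h3⟩

lemma sub_of_le (K : KnuthData I) (k : ℕ) {n m : ℕ} (hn : n < (K.L k).length)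
    (hm : m < (K.L k).length) (h : n ≤ m) :
    Segment.sub (K.Δ ((K.L k).get ⟨m, hm⟩)) (K.Δ ((K.L k).get ⟨n, hn⟩)) := by
  rcases eq_or_lt_of_le h with rfl | h
  · exact ⟨le_rfl, le_rfl⟩
  · haveI : IsTrans I fun p q => Segment.sub (K.Δ q) (K.Δ p) :=
      ⟨fun a b c hab hbc => ⟨le_trans hab.1 hbc.1, le_trans hbc.2 hab.2⟩⟩
    have hp := List.isChain_iff_pairwise.mp (K.hchain k)
    exact List.pairwise_iff_get.mp hp ⟨n, hn⟩ ⟨m, hm⟩ h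

/-- A non-selected index `i` sits at a non-final position `n` of its fiber list,
and `σ i` is the next entry. -/
lemma sigma_next (K : KnuthData I) {i : I} (hi : ¬ IhatP K i) :
    ∃ (n : ℕ) (hn1 : n + 1 < (K.L (K.d i)).length),
      (K.L (K.d i)).get ⟨n, Nat.lt_of_succ_lt hn1⟩ = i ∧
      K.σ i = (K.L (K.d i)).get ⟨n + 1, hn1⟩ := by
  have hmem : i ∈ K.L (K.d i) := (K.hmem _ i).mpr rfl
  obtain ⟨⟨n, hn⟩, hget⟩ := List.mem_iff_get.mp hmem
  have hne : K.L (K.d i) ≠ [] := List.ne_nil_of_mem hmem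
  have hn1 : n + 1 < (K.L (K.d i)).length := by
    rcases lt_or_ge (n + 1) (K.L (K.d i)).length with h | h
    · exact h
    · exfalso
      apply hi
      have : n = (K.L (K.d i)).length - 1 := by omega
      rw [IhatP, List.getLast?_eq_getLast hne, List.getLast_eq_getElem]
      subst this
      exact congrArg some hget
  refine ⟨n, hn1, hget, ?_⟩
  have := K.hσ (K.d i) n (Nat.lt_of_succ_lt hn1)
  rw [hget] at this
  rw [this]
  congr 1
  exact Fin.ext (Nat.mod_eq_of_lt hn1)

/-- Key lemma: `≪` on derived segments of non-selected indices strictly decreases depth. -/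
lemma key (K : KnuthData I) {i j : I} (hi : ¬ IhatP K i) (hj : ¬ IhatP K j)
    (h : Segment.ll (K.Δ' i) (K.Δ' j)) : K.d j < K.d i := by
  by_contra hle
  push_neg at hle
  obtain ⟨j₂, hdj₂, haj₂, hbj₂⟩ := exists_depth_eq K.hd (K.d j) j rfl (K.d i) hle
  obtain ⟨n, hn1, hget, hσi⟩ := sigma_next K hi
  obtain ⟨nj, hnjσ, hgetj, hσj⟩ := sigma_next K hj
  have hsubσj : Segment.sub (K.Δ (K.σ j)) (K.Δ j) := by
    have := sub_of_le K (K.d j) (Nat.lt_of_succ_lt hnjσ) hnjσ (Nat.le_succ nj)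
    rwa [hgetj, ← hσj] at this
  have ha : (K.Δ i).a < (K.Δ j₂).a := by
    have := h.1
    rw [K.hΔ'a i, K.hΔ'a j] at this
    exact lt_of_lt_of_le this haj₂
  have hb : (K.Δ (K.σ i)).b < (K.Δ j₂).b := by
    have h1 := h.2
    rw [K.hΔ'b i, K.hΔ'b j] at h1
    exact lt_of_lt_of_le (lt_of_lt_of_le h1 hsubσj.2) hbj₂
  have hmemj₂ : j₂ ∈ K.L (K.d i) := (K.hmem _ j₂).mpr hdj₂
  obtain ⟨⟨m, hm⟩, hgetm⟩ := List.mem_iff_get.mp hmemj₂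
  rcases le_or_gt m n with hc | hc
  · have := sub_of_le K (K.d i) hm (Nat.lt_of_succ_lt hn1) hc
    rw [hget, hgetm] at this
    exact absurd this.1 (not_le.mpr ha)
  · have := sub_of_le K (K.d i) hn1 hm hc
    rw [hgetm, ← hσi] at this
    exact absurd this.2 (not_le.mpr hb)

lemma chain_le (K : KnuthData I) :
    ∀ (m : ℕ) (i : {i : I // ¬ IhatP K i}),
      ChainFrom (fun i : {i : I // ¬ IhatP K i} => K.Δ' i.val) i m → m ≤ K.d i.val := by
  intro m
  induction m with
  | zero => intro i _; exact Nat.zero_le _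
  | succ m ih =>
    intro i hc
    obtain ⟨y, hll, hcy⟩ := chainFrom_tail hc
    have h1 : m ≤ K.d y.val := ih y hcy
    have h2 : K.d y.val < K.d i.val := key K i.2 y.2 hll
    omega

end Aux

/-- The depth with respect to the derived multisegment `𝔪'` (the family `Δ'` on the
non-selected indices `I' = I ∖ Î`) is at most the depth with respect to `𝔪`. -/
theorem derived_depth_le {I : Type*} [Fintype I] (K : KnuthData I)
    (d' : {i : I // ¬ IhatP K i} → ℕ)
    (hd' : IsDepth (fun i : {i : I // ¬ IhatP K i} => K.Δ' i.val) d') :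
    ∀ i : {i : I // ¬ IhatP K i}, d' i ≤ K.d i.val :=
  fun i => chain_le K (d' i) i (hd' i).1
end

section
/- Let 𝔪 be a non-degenerate nonzero multisegment with leading index set I*, and define I♭ = { i ∈ I : ∃ i' ∈ I* with b(Δ_i) = b(Δ_{i'}), Δ_i ⊊ Δ_{i'}, and 𝔡_𝔪(i) = 𝔡_𝔪(i') }. Then I* and I♭ are disjoint, and for i ∈ I the equality 𝔡_{𝔪†}(i) = 𝔡_𝔪(i) + 1 holds if and only if i ∈ I♭. -/
/-- The data of the Mœglin–Waldspurger step on a multisegment `Δ : I → Segment`: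
`m0 = min 𝔪` and the list `Ls` of leading indices `i₁, …, i_k` (so `I* = {i ∈ Ls}`). -/
structure MWData (I : Type*) where
  Δ : I → Segment
  m0 : ℤ
  hm0 : IsLeast {x | ∃ i, (Δ i).a = x} m0
  Ls : List I
  hne : Ls ≠ []
  hnodup : Ls.Nodup
  hhead : (Δ (Ls.head hne)).a = m0 ∧
    ∀ i, (Δ i).a = m0 → (Δ (Ls.head hne)).b ≤ (Δ i).b
  hchain : Ls.Chain' fun p q =>
    Segment.ll (Δ p) (Δ q) ∧ (Δ q).a = (Δ p).a + 1 ∧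
      ∀ i, Segment.ll (Δ p) (Δ i) → (Δ i).a = (Δ p).a + 1 → (Δ q).b ≤ (Δ i).b
  hlast : ¬ ∃ i, Segment.ll (Δ (Ls.getLast hne)) (Δ i) ∧
    (Δ i).a = (Δ (Ls.getLast hne)).a + 1

/-- `Δs` is the family of segments of `𝔪† = Σ Δ*_i`, where `Δ*_i = ⁻Δ_i = [b(Δ_i)+1, e(Δ_i)]`
for leading indices `i ∈ I*` and `Δ*_i = Δ_i` otherwise. -/
def IsMWDagger {I : Type*} (M : MWData I) (Δs : I → Segment) : Prop :=
  (∀ i ∈ M.Ls, (Δs i).a = (M.Δ i).a + 1 ∧ (Δs i).b = (M.Δ i).b) ∧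
  ∀ i ∉ M.Ls, Δs i = M.Δ i

/-- A multisegment is non-degenerate if no segment equals `[min 𝔪, min 𝔪]`. -/
def NonDeg {I : Type*} (Δ : I → Segment) (m0 : ℤ) : Prop :=
  ∀ i, ¬ ((Δ i).a = m0 ∧ (Δ i).b = m0)

section Aux

variable {I : Type*}

lemma Segment.ext' {s t : Segment} (ha : s.a = t.a) (hb : s.b = t.b) : s = t := by
  cases s; cases t; simp_all

/-- Tail of a chain. -/
lemma chainSteps_tail {Δ : I → Segment} {n : ℕ} {f : Fin (n + 2) → I}
    (hf : ∀ r : Fin (n + 1), Segment.ll (Δ (f r.castSucc)) (Δ (f r.succ))) :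
    ∀ r : Fin n, Segment.ll (Δ ((f ∘ Fin.succ) r.castSucc)) (Δ ((f ∘ Fin.succ) r.succ)) := by
  intro r
  have := hf r.succ
  rwa [← Fin.succ_castSucc] at this

/-- Prepend to a chain. -/
lemma chainFrom_cons {Δ : I → Segment} {n : ℕ} {f : Fin (n + 1) → I} {i : I}
    (h0 : Segment.ll (Δ i) (Δ (f 0)))
    (hf : ∀ r : Fin n, Segment.ll (Δ (f r.castSucc)) (Δ (f r.succ))) :
    ChainFrom Δ i (n + 1) := by
  refine ⟨Fin.cons i f, by simp, ?_⟩
  intro r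
  induction r using Fin.cases with
  | zero => simpa using h0
  | succ q =>
    have h1 : (q.succ.castSucc : Fin (n + 2)) = q.castSucc.succ := (Fin.succ_castSucc q).symm
    rw [h1, Fin.cons_succ, Fin.cons_succ]
    exact hf q

/-- Replace the start of a chain by a componentwise-smaller segment. -/
lemma chainFrom_mono {Δ : I → Segment} {i j : I} (ha : (Δ i).a ≤ (Δ j).a)
    (hb : (Δ i).b ≤ (Δ j).b) {n : ℕ} (h : ChainFrom Δ j n) : ChainFrom Δ i n := by
  obtain ⟨f, h0, hf⟩ := h
  cases n with
  | zero => exact ⟨fun _ => i, rfl, fun r => r.elim0⟩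
  | succ n =>
    refine ⟨fun r => if r = 0 then i else f r, by simp, ?_⟩
    intro r
    by_cases hr : r = 0
    · subst hr
      have h1 : ((0 : Fin (n + 1)).succ : Fin (n + 2)) ≠ 0 := Fin.succ_ne_zero _
      simp only [Fin.castSucc_zero, if_pos rfl, if_neg h1]
      have := hf 0
      rw [Fin.castSucc_zero, h0] at this
      exact ⟨lt_of_le_of_lt ha this.1, lt_of_le_of_lt hb this.2⟩
    · have h1 : r.castSucc ≠ 0 := by simpa [Fin.castSucc_eq_zero_iff] using hr
      have h2 : r.succ ≠ 0 := Fin.succ_ne_zero _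
      simp only [if_neg h1, if_neg h2]
      exact hf r

lemma depth_mono {Δ : I → Segment} {d : I → ℕ} (hd : IsDepth Δ d) {i j : I}
    (ha : (Δ i).a ≤ (Δ j).a) (hb : (Δ i).b ≤ (Δ j).b) : d j ≤ d i :=
  (hd i).2 (chainFrom_mono ha hb (hd j).1)

lemma depth_step {Δ : I → Segment} {d : I → ℕ} (hd : IsDepth Δ d) {i j : I}
    (h : Segment.ll (Δ i) (Δ j)) : d j + 1 ≤ d i := by
  obtain ⟨f, h0, hf⟩ := (hd j).1
  exact (hd i).2 (chainFrom_cons (by rwa [h0]) hf)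

lemma list_succ_or {α : Type*} {R : α → α → Prop} :
    ∀ (l : List α) (h : l ≠ []), l.Chain' R → ∀ {i : α}, i ∈ l →
      (∃ q ∈ l, R i q) ∨ i = l.getLast h := by
  intro l
  induction l with
  | nil => simp
  | cons x xs ih =>
    intro h hc i hi
    cases xs with
    | nil =>
      right
      simp only [List.mem_singleton] at hi
      simp [hi]
    | cons y ys =>
      replace hc := List.isChain_cons_cons.mp hc
      rcases List.mem_cons.mp hi with rfl | hi'
      · exact Or.inl ⟨y, by simp, hc.1⟩
      · rcases ih (by simp) hc.2 hi' with ⟨q, hq, hr⟩ | hlast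
        · exact Or.inl ⟨q, List.mem_cons_of_mem _ hq, hr⟩
        · right
          rw [List.getLast_cons (by simp : (y :: ys) ≠ [])]
          exact hlast

lemma list_pred_or {α : Type*} {R : α → α → Prop} :
    ∀ (l : List α) (h : l ≠ []), l.Chain' R → ∀ {i : α}, i ∈ l →
      i = l.head h ∨ ∃ p ∈ l, R p i := by
  intro l
  induction l with
  | nil => simp
  | cons x xs ih =>
    intro h hc i hi
    rcases List.mem_cons.mp hi with rfl | hi'
    · exact Or.inl rfl
    · cases xs with
      | nil => cases hi'
      | cons y ys =>
        replace hc := List.isChain_cons_cons.mp hc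
        rcases ih (by simp) hc.2 hi' with hh | ⟨p, hp, hr⟩
        · refine Or.inr ⟨x, by simp, ?_⟩
          have : i = y := hh
          rw [this]; exact hc.1
        · exact Or.inr ⟨p, List.mem_cons_of_mem _ hp, hr⟩

variable {M : MWData I} {Δs : I → Segment}

lemma dag_b (hΔs : IsMWDagger M Δs) (j : I) : (Δs j).b = (M.Δ j).b := by
  by_cases h : j ∈ M.Ls
  · exact (hΔs.1 j h).2
  · rw [hΔs.2 j h]

lemma dag_a_lb (hΔs : IsMWDagger M Δs) (j : I) : (M.Δ j).a ≤ (Δs j).a := by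
  by_cases h : j ∈ M.Ls
  · rw [(hΔs.1 j h).1]; omega
  · rw [hΔs.2 j h]

lemma dag_a_ub (hΔs : IsMWDagger M Δs) (j : I) : (Δs j).a ≤ (M.Δ j).a + 1 := by
  by_cases h : j ∈ M.Ls
  · rw [(hΔs.1 j h).1]
  · rw [hΔs.2 j h]; omega

lemma mw_a_inj (M : MWData I) {i j : I} (hi : i ∈ M.Ls) (hj : j ∈ M.Ls)
    (hij : (M.Δ i).a = (M.Δ j).a) : i = j := by
  haveI : IsTrans I fun p q => (M.Δ p).a < (M.Δ q).a := ⟨fun _ _ _ => lt_trans⟩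
  have hp : M.Ls.Pairwise fun p q => (M.Δ p).a < (M.Δ q).a :=
    List.isChain_iff_pairwise.mp (M.hchain.imp fun _ _ h => h.1.1)
  have hp' : M.Ls.Pairwise fun p q => (M.Δ p).a ≠ (M.Δ q).a := hp.imp fun h => ne_of_lt h
  by_contra hne
  have hsym : Symmetric fun p q : I => (M.Δ p).a ≠ (M.Δ q).a := fun _ _ h e => h e.symm
  haveI : Std.Symm fun p q : I => (M.Δ p).a ≠ (M.Δ q).a := ⟨fun _ _ h => hsym h⟩
  exact hp'.forall hi hj hne hij

lemma mw_not_flat (M : MWData I) (d : I → ℕ) {i : I} (hi : i ∈ M.Ls) :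
    ¬ ∃ i' ∈ M.Ls, (M.Δ i).a = (M.Δ i').a ∧ Segment.ssub (M.Δ i) (M.Δ i') ∧ d i = d i' := by
  rintro ⟨i', hi', ha, hss, -⟩
  exact hss.2 (by rw [mw_a_inj M hi hi' ha])

/-- Lifting Δ-chains to Δ†-chains. -/
lemma mw_lift (M : MWData I) (hΔs : IsMWDagger M Δs) :
    ∀ n (f : Fin (n + 1) → I),
      (∀ r : Fin n, Segment.ll (M.Δ (f r.castSucc)) (M.Δ (f r.succ))) →
      ∀ g0 : I,
        (g0 = f 0 ∨ (g0 ∈ M.Ls ∧ (M.Δ g0).a = (M.Δ (f 0)).a ∧ (M.Δ g0).b ≤ (M.Δ (f 0)).b)) →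
        ChainFrom Δs g0 n := by
  intro n
  induction n with
  | zero => exact fun f _ g0 _ => ⟨fun _ => g0, rfl, fun r => r.elim0⟩
  | succ n ih =>
    intro f hf g0 hg0
    have hg0a : (M.Δ g0).a ≤ (M.Δ (f 0)).a := by
      rcases hg0 with rfl | ⟨_, h, _⟩
      · exact le_refl _
      · exact le_of_eq h
    have hg0b : (M.Δ g0).b ≤ (M.Δ (f 0)).b := by
      rcases hg0 with rfl | ⟨_, _, h⟩
      · exact le_refl _
      · exact h
    have hstep : Segment.ll (M.Δ (f 0)) (M.Δ (f 1)) := by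
      have := hf 0
      rwa [Fin.castSucc_zero, Fin.succ_zero_eq_one] at this
    have htail := chainSteps_tail hf
    have hf10 : (f ∘ Fin.succ) 0 = f 1 := by
      simp [Function.comp, Fin.succ_zero_eq_one]
    by_cases hok : Segment.ll (Δs g0) (Δs (f 1))
    · obtain ⟨g, hg01, hgch⟩ := ih (f ∘ Fin.succ) htail (f 1) (Or.inl hf10.symm)
      exact chainFrom_cons (by rwa [hg01]) hgch
    · -- failure: g0 ∈ Ls, a's equalities
      have hbb : (Δs g0).b < (Δs (f 1)).b := by
        rw [dag_b hΔs, dag_b hΔs]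
        exact lt_of_le_of_lt hg0b hstep.2
      have haa : (Δs (f 1)).a ≤ (Δs g0).a := by
        by_contra hlt
        exact hok ⟨by omega, hbb⟩
      have h1 : (Δs g0).a ≤ (M.Δ g0).a + 1 := dag_a_ub hΔs g0
      have h2 : (M.Δ (f 1)).a ≤ (Δs (f 1)).a := dag_a_lb hΔs (f 1)
      have h3 : (M.Δ (f 0)).a < (M.Δ (f 1)).a := hstep.1
      have hg0mem : g0 ∈ M.Ls := by
        by_contra hmem
        rw [hΔs.2 g0 hmem] at haa
        omega
      have hg0a' : (Δs g0).a = (M.Δ g0).a + 1 := (hΔs.1 g0 hg0mem).1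
      have haeq : (M.Δ g0).a = (M.Δ (f 0)).a := le_antisymm hg0a (by omega)
      have ha1 : (M.Δ (f 1)).a = (M.Δ g0).a + 1 := by omega
      have hll1 : Segment.ll (M.Δ g0) (M.Δ (f 1)) :=
        ⟨by omega, lt_of_le_of_lt hg0b hstep.2⟩
      rcases list_succ_or M.Ls M.hne M.hchain hg0mem with ⟨q, hq, hrel⟩ | hlastg
      · have heq : (M.Δ q).b ≤ (M.Δ (f 1)).b := hrel.2.2 (f 1) hll1 ha1
        have haq : (M.Δ q).a = (M.Δ (f 1)).a := by
          rw [hrel.2.1]; omega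
        obtain ⟨g, hg01, hgch⟩ :=
          ih (f ∘ Fin.succ) htail q (Or.inr ⟨hq, by rwa [hf10], by rwa [hf10]⟩)
        refine chainFrom_cons ?_ hgch
        rw [hg01]
        refine ⟨?_, ?_⟩
        · rw [(hΔs.1 q hq).1, hg0a']
          have := hrel.1.1
          omega
        · rw [dag_b hΔs, dag_b hΔs]
          exact hrel.1.2
      · exact absurd ⟨f 1, by rw [← hlastg]; exact hll1, by rw [← hlastg]; omega⟩ M.hlast

end Aux

section Main

variable {I : Type*} {M : MWData I} {Δs : I → Segment}

lemma mw_ds_ge (hΔs : IsMWDagger M Δs) {d ds : I → ℕ}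
    (hd : IsDepth M.Δ d) (hds : IsDepth Δs ds) (i : I) : d i ≤ ds i := by
  obtain ⟨f, h0, hf⟩ := (hd i).1
  exact (hds i).2 (mw_lift M hΔs (d i) f hf i (Or.inl h0.symm))

lemma mw_ds_flat_ge (hΔs : IsMWDagger M Δs) {d ds : I → ℕ}
    (hd : IsDepth M.Δ d) (hds : IsDepth Δs ds) {i : I}
    (hfl : ∃ i' ∈ M.Ls, (M.Δ i).a = (M.Δ i').a ∧ Segment.ssub (M.Δ i) (M.Δ i') ∧ d i = d i') :
    d i + 1 ≤ ds i := by
  obtain ⟨i', hi', ha, hss, hdd⟩ := hfl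
  have hiL : i ∉ M.Ls := fun h => mw_not_flat M d h ⟨i', hi', ha, hss, hdd⟩
  have hbne : (M.Δ i).b < (M.Δ i').b :=
    lt_of_le_of_ne hss.1.2 fun e => hss.2 (Segment.ext' ha e)
  obtain ⟨f, h0, hf⟩ := (hd i').1
  obtain ⟨g, hg0, hg⟩ := mw_lift M hΔs (d i') f hf i' (Or.inl h0.symm)
  have hcons : ChainFrom Δs i (d i' + 1) := by
    refine chainFrom_cons ?_ hg
    rw [hg0]
    constructor
    · rw [hΔs.2 i hiL, (hΔs.1 i' hi').1]
      omega
    · rw [dag_b hΔs, dag_b hΔs]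
      exact hbne
  have := (hds i).2 hcons
  omega

lemma mw_key (M : MWData I) (hΔs : IsMWDagger M Δs) {d : I → ℕ} (hd : IsDepth M.Δ d) :
    ∀ n, ∀ i : I, ChainFrom Δs i n →
      (n ≤ d i + 1) ∧
      ((¬ ∃ i' ∈ M.Ls, (M.Δ i).a = (M.Δ i').a ∧ Segment.ssub (M.Δ i) (M.Δ i') ∧ d i = d i')
        → n ≤ d i) := by
  intro n
  induction n with
  | zero => exact fun i _ => ⟨Nat.zero_le _, fun _ => Nat.zero_le _⟩
  | succ n ih =>
    rintro i ⟨f, h0, hf⟩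
    have hstep : Segment.ll (Δs i) (Δs (f 1)) := by
      have := hf 0
      rwa [Fin.castSucc_zero, Fin.succ_zero_eq_one, h0] at this
    set j := f 1 with hjdef
    have htail : ChainFrom Δs j n :=
      ⟨f ∘ Fin.succ, by simp [Function.comp, Fin.succ_zero_eq_one, hjdef], chainSteps_tail hf⟩
    have IH := ih j htail
    have hbij : (M.Δ i).b < (M.Δ j).b := by
      have := hstep.2
      rwa [dag_b hΔs, dag_b hΔs] at this
    by_cases hll : Segment.ll (M.Δ i) (M.Δ j)
    · have hdij : d j + 1 ≤ d i := depth_step hd hll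
      by_cases hfl : ∃ i' ∈ M.Ls, (M.Δ j).a = (M.Δ i').a ∧
          Segment.ssub (M.Δ j) (M.Δ i') ∧ d j = d i'
      · obtain ⟨i', hi', haj, hssj, hdj⟩ := hfl
        have hbj : (M.Δ j).b < (M.Δ i').b :=
          lt_of_le_of_ne hssj.1.2 fun e => hssj.2 (Segment.ext' haj e)
        rcases list_pred_or M.Ls M.hne M.hchain hi' with hhead | ⟨p, hp, hrel⟩
        · exfalso
          have h1 : (M.Δ j).a = M.m0 := by rw [haj, hhead]; exact M.hhead.1
          have h2 := M.hhead.2 j h1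
          rw [← hhead] at h2
          omega
        · -- p is the predecessor of i' in Ls
          have hjp : (M.Δ j).b ≤ (M.Δ p).b := by
            by_contra hgt
            push_neg at hgt
            have hap : (M.Δ i').a = (M.Δ p).a + 1 := hrel.2.1
            have hllpj : Segment.ll (M.Δ p) (M.Δ j) := ⟨by omega, hgt⟩
            have := hrel.2.2 j hllpj (by omega)
            omega
          have haij : (M.Δ i).a < (M.Δ j).a := hll.1
          have haj' : (M.Δ j).a = (M.Δ p).a + 1 := by rw [haj]; exact hrel.2.1
          have hdpi' : d i' + 1 ≤ d p := depth_step hd hrel.1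
          by_cases hap : (M.Δ i).a = (M.Δ p).a
          · have hbip : (M.Δ i).b < (M.Δ p).b := lt_of_lt_of_le hll.2 hjp
            have hdip : d p ≤ d i := depth_mono hd (le_of_eq hap) (le_of_lt hbip)
            by_cases hdeq : d i = d p
            · refine ⟨by omega, fun hnfl => ?_⟩
              exact absurd ⟨p, hp, hap,
                ⟨⟨le_of_eq hap.symm, le_of_lt hbip⟩,
                  fun e => absurd (congrArg Segment.b e) (ne_of_lt hbip)⟩, hdeq⟩ hnfl
            · have : d p + 1 ≤ d i := by omega
              exact ⟨by omega, fun _ => by omega⟩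
          · have hlt : (M.Δ i).a < (M.Δ p).a := by omega
            have hllip : Segment.ll (M.Δ i) (M.Δ p) := ⟨hlt, lt_of_lt_of_le hll.2 hjp⟩
            have h1 : d p + 1 ≤ d i := depth_step hd hllip
            exact ⟨by omega, fun _ => by omega⟩
      · have h2 := IH.2 hfl
        exact ⟨by omega, fun _ => by omega⟩
    · -- the dagger step is not a Δ-step: i ∉ Ls, j ∈ Ls, equal begins
      have hanl : (M.Δ j).a ≤ (M.Δ i).a := by
        by_contra hlt
        exact hll ⟨by omega, hbij⟩
      have h1 := dag_a_lb hΔs i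
      have h2 := dag_a_ub hΔs j
      have h3 := hstep.1
      have hiL : i ∉ M.Ls := by
        intro h
        rw [(hΔs.1 i h).1] at h3
        omega
      have hia : (Δs i).a = (M.Δ i).a := by rw [hΔs.2 i hiL]
      have hjL : j ∈ M.Ls := by
        by_contra h
        rw [hΔs.2 j h] at h3
        omega
      have haij : (M.Δ i).a = (M.Δ j).a := by
        rw [(hΔs.1 j hjL).1] at h3
        omega
      have hdji : d j ≤ d i := depth_mono hd (le_of_eq haij) (le_of_lt hbij)
      have h4 := IH.2 (mw_not_flat M d hjL)
      by_cases hdeq : d i = d j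
      · refine ⟨by omega, fun hnfl => ?_⟩
        exact absurd ⟨j, hjL, haij,
          ⟨⟨le_of_eq haij.symm, le_of_lt hbij⟩,
            fun e => absurd (congrArg Segment.b e) (ne_of_lt hbij)⟩, hdeq⟩ hnfl
      · have : d j + 1 ≤ d i := by omega
        exact ⟨by omega, fun _ => by omega⟩

end Main

/-- For a non-degenerate multisegment with leading indices `I*` and
`I♭ = { i : ∃ i' ∈ I*, b(Δ i) = b(Δ i'), Δ i ⊊ Δ i', d i = d i' }`: the sets `I*` and `I♭` are
disjoint, and `d† i = d i + 1` holds if and only if `i ∈ I♭`. -/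
theorem mw_depth_plus_one_iff {I : Type*} [Fintype I] (M : MWData I)
    (hnd : NonDeg M.Δ M.m0)
    (Δs : I → Segment) (hΔs : IsMWDagger M Δs)
    (d ds : I → ℕ) (hd : IsDepth M.Δ d) (hds : IsDepth Δs ds) :
    (∀ i ∈ M.Ls, ¬ ∃ i' ∈ M.Ls, (M.Δ i).a = (M.Δ i').a ∧
        Segment.ssub (M.Δ i) (M.Δ i') ∧ d i = d i') ∧
    ∀ i, (ds i = d i + 1 ↔ ∃ i' ∈ M.Ls, (M.Δ i).a = (M.Δ i').a ∧
        Segment.ssub (M.Δ i) (M.Δ i') ∧ d i = d i') := by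
  constructor
  · intro i hi
    exact mw_not_flat M d hi
  · intro i
    constructor
    · intro hdse
      by_contra hnfl
      have h1 := (mw_key M hΔs hd (ds i) i (hds i).1).2 hnfl
      have h2 := mw_ds_ge hΔs hd hds i
      omega
    · intro hfl
      have h1 := mw_ds_flat_ge hΔs hd hds hfl
      have h2 := (mw_key M hΔs hd (ds i) i (hds i).1).1
      omega
end
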